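/- Let (A, m) be a stretched Artinian local ring of socle degree s (i.e., v(m²) = 1, m^s ≠ 0, m^{s+1} = 0) with m^j = (y₁^j) for 2 ≤ j ≤ s for some y₁ ∈ m. Then (0 : m) ∩ m² = m^s. -/

import Mathlib

open IsLocalRing

/-!
If `x` kills `m` and `x ∈ m^n = (y₁^n)` with `n < s`, write `x = a y₁^n`. Were `a` a unit,
`0 = x y₁ = a y₁^(n+1)` would force `y₁^s = 0`; so `a ∈ m` and `x ∈ m^(n+1)`. Climbing from
`n = 2` gives `(0 : m) ∩ m² ⊆ m^s`, and `m^s ⊆ (0 : m)` because `m^(s+1) = 0`.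
-/

theorem Ideal.pow_le_colon_bot_of_pow_succ_eq_bot {R : Type*} [CommRing R] {I : Ideal R}
    {s : ℕ} (h : I ^ (s + 1) = ⊥) : I ^ s ≤ Submodule.colon ⊥ (I : Set R) := by
  intro x hx
  refine Submodule.mem_colon.mpr fun p hp => ?_
  have hxp : x * p ∈ I ^ (s + 1) := pow_succ I s ▸ Ideal.mul_mem_mul hx hp
  simpa [h] using hxp

namespace IsLocalRing

variable {R : Type*} [CommRing R] [IsLocalRing R]

theorem mem_span_singleton_mul_maximalIdeal_of_mul_eq_zero {x y z : R}
    (hx : x ∈ Ideal.span {z}) (hxy : x * y = 0) (hzy : z * y ≠ 0) :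
    x ∈ Ideal.span {z} * maximalIdeal R := by
  obtain ⟨a, rfl⟩ := Ideal.mem_span_singleton'.mp hx
  have ha : a ∈ maximalIdeal R := by
    refine (mem_maximalIdeal a).mpr fun hu => hzy ?_
    rw [← hu.mul_right_eq_zero, ← hxy]
    ring
  rw [mul_comm a z]
  exact Ideal.mul_mem_mul (Ideal.mem_span_singleton_self z) ha

theorem mem_maximalIdeal_pow_succ_of_mem_colon {s n : ℕ} {x y : R}
    (hy : y ∈ maximalIdeal R) (hpow : maximalIdeal R ^ n = Ideal.span {y ^ n})
    (hsoc : y ^ s ≠ 0) (hns : n < s)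
    (hx : x ∈ Submodule.colon ⊥ ((maximalIdeal R : Ideal R) : Set R))
    (hxn : x ∈ maximalIdeal R ^ n) : x ∈ maximalIdeal R ^ (n + 1) := by
  have hxy : x * y = 0 := by simpa using Submodule.mem_colon.mp hx y hy
  have hyn : y ^ n * y ≠ 0 := by
    rw [← pow_succ]
    exact fun h => hsoc (pow_eq_zero_of_le hns h)
  rw [hpow] at hxn
  rw [pow_succ, hpow]
  exact mem_span_singleton_mul_maximalIdeal_of_mul_eq_zero hxn hxy hyn

end IsLocalRing

theorem stretched_socle_inter
    (A : Type*) [CommRing A] [IsLocalRing A]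
    (s : ℕ) (hs : 2 ≤ s)
    (y₁ : A) (hy₁ : y₁ ∈ maximalIdeal A)
    (hpow : ∀ j, 2 ≤ j → j ≤ s → (maximalIdeal A) ^ j = Ideal.span {y₁ ^ j})
    (hsoc : y₁ ^ s ≠ 0) (htop : (maximalIdeal A) ^ (s + 1) = ⊥) :
    Submodule.colon ⊥ ((maximalIdeal A : Ideal A) : Set A) ⊓ (maximalIdeal A) ^ 2 = (maximalIdeal A) ^ s := by
  refine le_antisymm ?_ (le_inf (Ideal.pow_le_colon_bot_of_pow_succ_eq_bot htop)
    (Ideal.pow_le_pow_right hs))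
  rintro x ⟨hx, hx₂⟩
  have hclimb : ∀ j, 2 ≤ j → j ≤ s → x ∈ maximalIdeal A ^ j := by
    intro j hj
    induction j, hj using Nat.le_induction with
    | base => exact fun _ => hx₂
    | succ n hn ih =>
      intro hns
      exact mem_maximalIdeal_pow_succ_of_mem_colon hy₁ (hpow n hn (by omega)) hsoc hns hx
        (ih (by omega))
  exact hclimb s hs le_rfl
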